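/- arXiv:2403.03193 — 7 statements merged into one kernel-verified Lean document; each statement's English description precedes it below -/
import Mathlib

section
/- Let α be a type with decidable equality, let Del : α → Bool be a deletion flag, and let l₁ l₂ : List α be two symbolic relations. Write F₁ := l₁.filter (fun a => !Del a) and F₂ := l₂.filter (fun a => !Del a) for their non-deleted parts. If F₁.length = F₂.length, and for every tuple a ∈ F₁ one has List.count a F₁ = List.count a F₂, then F₁ is a permutation of F₂; that is, the two relations are equal under bag semantics. -/
/-- Bag-semantics part of Lemma 4.4: if the non-deleted parts of two symbolic
relations have the same length, and every non-deleted tuple of the first has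
the same multiplicity in both non-deleted parts, then the non-deleted parts
are permutations of each other (equal as bags). -/
theorem bag_semantics_equality {α : Type*} [DecidableEq α] (Del : α → Bool)
    (l₁ l₂ : List α)
    (hlen : (l₁.filter (fun a => !Del a)).length = (l₂.filter (fun a => !Del a)).length)
    (hcount : ∀ a ∈ l₁.filter (fun a => !Del a),
      List.count a (l₁.filter (fun a => !Del a)) =
        List.count a (l₂.filter (fun a => !Del a))) :
    (l₁.filter (fun a => !Del a)).Perm (l₂.filter (fun a => !Del a)) := by
  set F₁ := l₁.filter (fun a => !Del a)
  set F₂ := l₂.filter (fun a => !Del a)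
  have hle : (F₁ : Multiset α) ≤ (F₂ : Multiset α) := by
    rw [Multiset.le_iff_count]
    intro a
    by_cases h : a ∈ F₁
    · simpa [Multiset.coe_count] using (hcount a h).le
    · simp [Multiset.coe_count, List.count_eq_zero_of_not_mem h]
  have heq : (F₁ : Multiset α) = (F₂ : Multiset α) :=
    Multiset.eq_of_le_of_card_le hle (by simpa using hlen.ge)
  exact Quotient.exact heq
end

section
/- Let α be a type with decidable equality and let s t : Multiset α. If Multiset.card s = Multiset.card t and for every x ∈ s one has Multiset.count x s = Multiset.count x t, then s = t. -/
/-- Multiset-level core of Lemma 4.4: equal cardinalities together with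
one-sided agreement of multiplicities (on elements of the first multiset)
force equality of the two multisets. -/
theorem multiset_eq_of_card_eq_of_count_eq {α : Type*} [DecidableEq α]
    (s t : Multiset α)
    (hcard : Multiset.card s = Multiset.card t)
    (hcount : ∀ x ∈ s, Multiset.count x s = Multiset.count x t) :
    s = t := by
  have hle : s ≤ t := by
    rw [Multiset.le_iff_count]
    intro x
    by_cases hx : x ∈ s
    · exact (hcount x hx).le
    · simp [Multiset.count_eq_zero_of_notMem hx]
  exact Multiset.eq_of_le_of_card_le hle hcard.ge
end

section
/- Let α be a type, let Del : α → Bool be a deletion flag, and let l₁ l₂ : List α be lists that each have all their deleted elements at the end: l₁ = p₁ ++ q₁ and l₂ = p₂ ++ q₂, where every element a of p₁ and of p₂ satisfies Del a = false and every element a of q₁ and of q₂ satisfies Del a = true. If p₁.length = p₂.length and for every index i < min (l₁.length) (l₂.length) the i-th elements of l₁ and l₂ are equal, then p₁ = p₂; equivalently, l₁.filter (fun a => !Del a) = l₂.filter (fun a => !Del a), i.e., the two relations are equal under list semantics. -/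
/-- List-semantics part of Lemma 4.4: if two symbolic relations each have all
their deleted tuples at the end, have the same number of non-deleted tuples,
and agree index-wise up to the shorter length, then their non-deleted parts
are equal as lists. -/
theorem list_semantics_equality {α : Type*} (Del : α → Bool)
    (l₁ l₂ p₁ q₁ p₂ q₂ : List α)
    (hl₁ : l₁ = p₁ ++ q₁) (hl₂ : l₂ = p₂ ++ q₂)
    (hp₁ : ∀ a ∈ p₁, Del a = false) (hp₂ : ∀ a ∈ p₂, Del a = false)
    (hq₁ : ∀ a ∈ q₁, Del a = true) (hq₂ : ∀ a ∈ q₂, Del a = true)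
    (hlen : p₁.length = p₂.length)
    (hidx : ∀ i, i < min l₁.length l₂.length → l₁[i]? = l₂[i]?) :
    p₁ = p₂ ∧ l₁.filter (fun a => !Del a) = l₂.filter (fun a => !Del a) := by
  have hpp : p₁ = p₂ := by
    apply List.ext_getElem? (fun i => ?_)
    by_cases h : i < p₁.length
    · have h2 : i < p₂.length := hlen ▸ h
      have hi := hidx i (by
        simp [hl₁, hl₂, List.length_append]
        omega)
      rw [hl₁, hl₂] at hi
      rwa [List.getElem?_append_left h, List.getElem?_append_left h2] at hi
    · rw [List.getElem?_eq_none (by omega), List.getElem?_eq_none (by omega)]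
  have f1 : l₁.filter (fun a => !Del a) = p₁ := by
    rw [hl₁, List.filter_append, List.filter_eq_self.2 (by simp_all),
      List.filter_eq_nil_iff.2 (by simp_all), List.append_nil]
  have f2 : l₂.filter (fun a => !Del a) = p₂ := by
    rw [hl₂, List.filter_append, List.filter_eq_self.2 (by simp_all),
      List.filter_eq_nil_iff.2 (by simp_all), List.append_nil]
  exact ⟨hpp, by rw [f1, f2, hpp]⟩
end

section
/- Let β be a linear order, f : α → β, and l : List α a nonempty list (with α inhabited, so l.headI is its first element). Define the minimum fold minFold f l := l.foldl (fun x y => if f y < f x then y else x) l.headI. Then minFold f l is the first element of l attaining the minimum value of f on l; in particular some (minFold f l) = l.argmin f, minFold f l ∈ l, and f (minFold f l) ≤ f y for all y ∈ l. -/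
/-- The paper's `MinTuple` fold (for an ascending `ORDER BY`), abstracted to a
single key function `f` into a linear order. -/
def minFold {α β : Type*} [Inhabited α] [LinearOrder β] (f : α → β) (l : List α) : α :=
  l.foldl (fun x y => if f y < f x then y else x) l.headI

private theorem minFold_aux {α β : Type*} [LinearOrder β] (f : α → β) :
    ∀ (t : List α) (a : α),
      some (t.foldl (fun x y => if f y < f x then y else x) a) =
        t.foldl (List.argAux fun b c => f b < f c) (some a) := by
  intro t
  induction t with
  | nil => intro a; rfl
  | cons b t ih =>
    intro a
    simp only [List.foldl_cons, List.argAux]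
    split <;> exact ih _

/-- On a nonempty list, the minimum fold returns the first element attaining
the minimum value of `f`: it equals `l.argmin f`, belongs to `l`, and its
`f`-value is a lower bound for `f` on `l`. -/
theorem minFold_spec {α β : Type*} [Inhabited α] [LinearOrder β]
    (f : α → β) (l : List α) (hl : l ≠ []) :
    some (minFold f l) = l.argmin f ∧
    minFold f l ∈ l ∧
    ∀ y ∈ l, f (minFold f l) ≤ f y := by
  obtain ⟨a, t, rfl⟩ := List.exists_cons_of_ne_nil hl
  have h1 : some (minFold f (a :: t)) = (a :: t).argmin f := by
    simp only [minFold, List.headI, List.argmin, List.foldl_cons, List.argAux]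
    simp only [lt_irrefl, if_false]
    exact minFold_aux f t a
  have h2 : minFold f (a :: t) ∈ (a :: t) := List.argmin_mem h1.symm
  exact ⟨h1, h2, fun y hy => List.le_of_mem_argmin hy h1.symm⟩
end

section
/- Let α be a type with decidable equality that is inhabited, let β be a linear order, and let f : α → β. Define the bag-difference fold bagDiff l₁ l₂ := l₂.foldl (fun xs x => if x ∈ xs then xs.erase x else xs) l₁ and the minimum fold minFold f l := l.foldl (fun x y => if f y < f x then y else x) l.headI. Define the selection sort orderBy f l := l.foldl (fun xs _ => xs ++ [minFold f (bagDiff l xs)]) []. Then for every l : List α, orderBy f l is a permutation of l and is sorted non-decreasingly by f, i.e., List.Sorted (fun a b => f a ≤ f b) (orderBy f l). -/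
/-!
Each step of the fold appends a minimum of what has not been output yet. So the output `xs`
stays a sub-bag of `l` that is sorted and whose elements are all below every element of the
remaining bag `l - xs`; appending a minimum of `l - xs` preserves this. After `l.length` steps
the sub-bag has the size of `l`, hence is all of `l`.
-/

/-- The paper's fold semantics for SQL's `EXCEPT ALL` (bag difference). -/
def bagDiff {α : Type*} [DecidableEq α] (l₁ l₂ : List α) : List α :=
  l₂.foldl (fun xs x => if x ∈ xs then xs.erase x else xs) l₁

/-- The paper's selection-sort semantics of `ORDER BY`. -/
def orderBy {α β : Type*} [DecidableEq α] [Inhabited α] [LinearOrder β]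
    (f : α → β) (l : List α) : List α :=
  l.foldl (fun xs _ => xs ++ [minFold f (bagDiff l xs)]) []

theorem bagDiff_eq_diff {α : Type*} [DecidableEq α] (l₁ l₂ : List α) :
    bagDiff l₁ l₂ = l₁.diff l₂ := by
  rw [bagDiff, List.diff_eq_foldl]
  refine congrArg (List.foldl · l₁ l₂) (funext₂ fun xs x => ?_)
  split_ifs with hx
  · rfl
  · exact (List.erase_of_not_mem hx).symm

section minFold

variable {α β : Type*} [LinearOrder β] (f : α → β)

theorem foldl_ite_lt_eq_argmin (a : α) (l : List α) :
    some (l.foldl (fun x y => if f y < f x then y else x) a) = (a :: l).argmin f := by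
  induction l generalizing a with
  | nil => rfl
  | cons b l ih =>
    rw [List.foldl_cons, ih, List.argmin, List.argmin]
    simp [List.argAux, apply_ite]

theorem minFold_mem_argmin [Inhabited α] {l : List α} (hl : l ≠ []) :
    minFold f l ∈ l.argmin f := by
  obtain ⟨a, l, rfl⟩ := List.exists_cons_of_ne_nil hl
  rw [minFold, List.headI_cons, List.foldl_cons, if_neg (lt_irrefl _)]
  exact (foldl_ite_lt_eq_argmin f a l).symm

theorem minFold_mem [Inhabited α] {l : List α} (hl : l ≠ []) : minFold f l ∈ l :=
  List.argmin_mem (minFold_mem_argmin f hl)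

theorem minFold_le [Inhabited α] {l : List α} {b : α} (hb : b ∈ l) : f (minFold f l) ≤ f b :=
  List.le_of_mem_argmin hb (minFold_mem_argmin f (List.ne_nil_of_mem hb))

end minFold

structure IsSortedPrefixOf {α β : Type*} [DecidableEq α] [LE β] (f : α → β) (xs l : List α) :
    Prop where
  le : (xs : Multiset α) ≤ l
  sorted : xs.Pairwise (fun a b => f a ≤ f b)
  le_rest : ∀ a ∈ xs, ∀ b ∈ (l : Multiset α) - xs, f a ≤ f b

namespace IsSortedPrefixOf

variable {α β : Type*} [DecidableEq α]

theorem nil [LE β] (f : α → β) (l : List α) : IsSortedPrefixOf f [] l :=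
  ⟨Multiset.zero_le _, List.Pairwise.nil, fun _ ha => absurd ha List.not_mem_nil⟩

theorem concat [LE β] {f : α → β} {xs l : List α} {m : α} (h : IsSortedPrefixOf f xs l)
    (hm : m ∈ (l : Multiset α) - xs) (hm_le : ∀ b ∈ (l : Multiset α) - xs, f m ≤ f b) :
    IsSortedPrefixOf f (xs ++ [m]) l := by
  have hcoe : ((xs ++ [m] : List α) : Multiset α) = xs + {m} := (Multiset.coe_add _ _).symm
  have hrest : (l : Multiset α) - (xs ++ [m] : List α) ≤ (l : Multiset α) - xs := by
    rw [hcoe, tsub_add_eq_tsub_tsub]; exact tsub_le_self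
  refine ⟨?_, ?_, ?_⟩
  · rw [hcoe, ← le_tsub_iff_left h.le]
    exact Multiset.singleton_le.mpr hm
  · exact List.pairwise_append.mpr ⟨h.sorted, List.pairwise_singleton _ _,
      fun a ha b hb => List.eq_of_mem_singleton hb ▸ h.le_rest a ha m hm⟩
  · intro a ha b hb
    replace hb := Multiset.mem_of_le hrest hb
    rcases List.mem_append.mp ha with ha | ha
    · exact h.le_rest a ha b hb
    · exact List.eq_of_mem_singleton ha ▸ hm_le b hb

theorem concat_minFold [Inhabited α] [LinearOrder β] {f : α → β} {xs l : List α}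
    (h : IsSortedPrefixOf f xs l) (hlen : xs.length < l.length) :
    IsSortedPrefixOf f (xs ++ [minFold f (bagDiff l xs)]) l := by
  have hrest : (bagDiff l xs : Multiset α) = l - xs := by
    rw [bagDiff_eq_diff, Multiset.coe_sub]
  have hne : bagDiff l xs ≠ [] := by
    rw [← List.length_pos_iff, ← Multiset.coe_card, hrest, Multiset.card_sub h.le]
    simpa using hlen
  refine h.concat ?_ fun b hb => ?_
  · rw [← hrest]; exact minFold_mem f hne
  · rw [← hrest] at hb; exact minFold_le f hb

theorem perm [LE β] {f : α → β} {xs l : List α} (h : IsSortedPrefixOf f xs l)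
    (hlen : l.length ≤ xs.length) : xs.Perm l :=
  Multiset.coe_eq_coe.mp (Multiset.eq_of_le_of_card_le h.le hlen)

end IsSortedPrefixOf

section orderBy

variable {α β : Type*} [DecidableEq α] [Inhabited α] [LinearOrder β]

def selectMin (f : α → β) (l xs : List α) : List α :=
  xs ++ [minFold f (bagDiff l xs)]

theorem orderBy_eq_iterate (f : α → β) (l : List α) :
    orderBy f l = (selectMin f l)^[l.length] [] :=
  List.foldl_const _ _ _

theorem isSortedPrefixOf_iterate_selectMin (f : α → β) (l : List α) {k : ℕ}
    (hk : k ≤ l.length) :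
    IsSortedPrefixOf f ((selectMin f l)^[k] []) l ∧ ((selectMin f l)^[k] []).length = k := by
  induction k with
  | zero => exact ⟨IsSortedPrefixOf.nil f l, rfl⟩
  | succ k ih =>
    obtain ⟨hsorted, hlen⟩ := ih (by omega)
    rw [Function.iterate_succ_apply']
    exact ⟨hsorted.concat_minFold (by omega), by simp [selectMin, hlen]⟩

end orderBy

/-- The selection sort defining `ORDER BY` produces a permutation of the
input list that is sorted non-decreasingly by the key `f`. -/
theorem orderBy_spec {α β : Type*} [DecidableEq α] [Inhabited α] [LinearOrder β]
    (f : α → β) (l : List α) :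
    (orderBy f l).Perm l ∧ List.Pairwise (fun a b => f a ≤ f b) (orderBy f l) := by
  obtain ⟨hsorted, hlen⟩ := isSortedPrefixOf_iterate_selectMin f l le_rfl
  rw [orderBy_eq_iterate]
  exact ⟨hsorted.perm hlen.ge, hsorted.sorted⟩
end

section
/- Let β be a type with decidable equality, key : γ → β, and l : List γ. Let vs := (l.map key).foldr (fun x xs => x :: xs.filter (fun y => y ≠ x)) [] be the list of distinct key values of l in order of first occurrence, and let Gs := vs.map (fun v => l.filter (fun z => key z = v)) be the corresponding groups. Then: (i) vs has no duplicates (vs.Nodup); (ii) every group G ∈ Gs is nonempty; (iii) the concatenation Gs.flatten is a permutation of l; and (iv) for each index i < vs.length, every element z of the i-th group of Gs satisfies key z = the i-th element of vs. -/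
section DedupFirst

variable {β : Type*} [DecidableEq β]

/-- Deduplication keeping the first occurrence of each value (`List.dedup` keeps the last). -/
def dedupFirst (m : List β) : List β :=
  m.foldr (fun x xs => x :: xs.filter (fun y => decide (y ≠ x))) []

@[simp]
theorem dedupFirst_nil : dedupFirst ([] : List β) = [] := rfl

@[simp]
theorem dedupFirst_cons (x : β) (m : List β) :
    dedupFirst (x :: m) = x :: (dedupFirst m).filter (fun y => decide (y ≠ x)) := rfl

@[simp]
theorem mem_dedupFirst {m : List β} {a : β} : a ∈ dedupFirst m ↔ a ∈ m := by
  induction m with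
  | nil => simp
  | cons x m ih =>
    by_cases h : a = x <;> simp [h, ih]

theorem nodup_dedupFirst (m : List β) : (dedupFirst m).Nodup := by
  induction m with
  | nil => simp
  | cons x m ih =>
    rw [dedupFirst_cons]
    exact (ih.filter _).cons (by simp)

end DedupFirst

section Groups

variable {β γ : Type*} [DecidableEq β] (key : γ → β)

theorem flatten_map_filter_key_eq_perm (l : List γ) {vs : List β} (hvs : vs.Nodup) :
    (vs.map fun v => l.filter fun z => decide (key z = v)).flatten.Perm
      (l.filter fun z => decide (key z ∈ vs)) := by
  induction vs with
  | nil => simp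
  | cons v vs ih =>
    obtain ⟨hv, hvs⟩ := List.nodup_cons.mp hvs
    have split := List.filter_append_perm (fun z => decide (key z = v))
      (l.filter fun z => decide (key z ∈ v :: vs))
    rw [List.filter_filter, List.filter_filter] at split
    have keep : ∀ z ∈ l,
        (decide (key z = v) && decide (key z ∈ v :: vs)) = decide (key z = v) := by
      intro z _; by_cases h : key z = v <;> simp [h]
    have rest : ∀ z ∈ l,
        (!decide (key z = v) && decide (key z ∈ v :: vs)) = decide (key z ∈ vs) := by
      intro z _
      by_cases h : key z = v
      · simp [h, hv]
      · simp [h]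
    rw [List.filter_congr keep, List.filter_congr rest] at split
    simpa using ((ih hvs).append_left _).trans split

theorem flatten_map_filter_key_eq_perm_self {l : List γ} {vs : List β} (hvs : vs.Nodup)
    (hl : ∀ z ∈ l, key z ∈ vs) :
    (vs.map fun v => l.filter fun z => decide (key z = v)).flatten.Perm l := by
  have keep_all : l.filter (fun z => decide (key z ∈ vs)) = l :=
    List.filter_eq_self.mpr fun z hz => decide_eq_true (hl z hz)
  simpa only [keep_all] using flatten_map_filter_key_eq_perm key l hvs

end Groups

/-- Correctness of the paper's `GROUP BY` partition: the distinct key values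
`vs` (first-occurrence deduplication of the key values of `l`) have no
duplicates, each induced group is nonempty, the groups together form a
permutation of the input relation, and every element of the `i`-th group has
the `i`-th key value. -/
theorem groupBy_partition {β γ : Type*} [DecidableEq β] (key : γ → β) (l : List γ)
    (vs : List β) (Gs : List (List γ))
    (hvs : vs = (l.map key).foldr (fun x xs => x :: xs.filter (fun y => decide (y ≠ x))) [])
    (hGs : Gs = vs.map (fun v => l.filter (fun z => decide (key z = v)))) :
    vs.Nodup ∧
    (∀ G ∈ Gs, G ≠ []) ∧
    Gs.flatten.Perm l ∧
    ∀ i (hi : i < vs.length) (hg : i < Gs.length), ∀ z ∈ Gs[i], key z = vs[i] := by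
  change vs = dedupFirst (l.map key) at hvs
  have mem_vs : ∀ v, v ∈ vs ↔ ∃ z ∈ l, key z = v := by simp [hvs]
  subst hGs
  refine ⟨hvs ▸ nodup_dedupFirst _, ?_, ?_, ?_⟩
  · simp only [List.mem_map, forall_exists_index, and_imp]
    rintro _ v hv rfl
    obtain ⟨z, hz, rfl⟩ := (mem_vs v).mp hv
    exact List.ne_nil_of_mem (List.mem_filter.mpr ⟨hz, by simp⟩)
  · exact flatten_map_filter_key_eq_perm_self key (hvs ▸ nodup_dedupFirst _)
      fun z hz => (mem_vs _).mpr ⟨z, hz, rfl⟩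
  · intro i _ _ z hz
    rw [List.getElem_map, List.mem_filter] at hz
    exact of_decide_eq_true hz.2
end

section
/- Let α be a type with decidable equality and l₁ l₂ : List α, and let Paired : ℕ → ℕ → Prop be defined by well-founded recursion (on i + j): Paired i j holds iff i < l₁.length, j < l₂.length, the i-th element of l₁ equals the j-th element of l₂, no k < i satisfies Paired k j, and no k < j satisfies Paired i k. Call an index i < l₁.length unpaired if no j satisfies Paired i j. Then the multiset of elements of l₁ at unpaired indices equals the multiset difference of l₁ and l₂: it equals (↑l₁ : Multiset α) - (↑l₂ : Multiset α). -/
/-!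
Positions `i` of `l₁` and `j` of `l₂` are paired exactly when they hold the same value `v` and
are occurrences of `v` with equally many earlier copies (`List.countBefore v`): this predicate
satisfies the recurrence defining `Paired`, and that recurrence has only one solution. Hence an
occurrence of `v` in `l₁` is unpaired iff at least `l₂.count v` copies of `v` precede it, and
`List.idxOfNth` shows that exactly `l₁.count v - l₂.count v` occurrences are of that kind.
-/

/-- The paper's `Paired` recurrence for encoding `EXCEPT ALL`: positions
`i` of `l₁` and `j` of `l₂` are paired iff they hold equal elements and
neither is paired with an earlier position of the other list. The recursion
is well-founded since `i + j` strictly decreases. -/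
def Paired {α : Type*} (l₁ l₂ : List α) : ℕ → ℕ → Prop
  | i, j =>
    i < l₁.length ∧ j < l₂.length ∧ l₁[i]? = l₂[j]? ∧
    (∀ k, k < i → ¬ Paired l₁ l₂ k j) ∧
    (∀ k, k < j → ¬ Paired l₁ l₂ i k)
  termination_by i j => i + j
  decreasing_by all_goals omega

namespace List

variable {α : Type*} [BEq α] {l : List α} {v : α} {i j m : ℕ}

theorem countBefore_mono (h : i ≤ j) : l.countBefore v i ≤ l.countBefore v j :=
  countPBefore_mono h

variable [LawfulBEq α]

theorem countBefore_lt_countBefore (hi : l[i]? = some v) (hij : i < j) :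
    l.countBefore v i < l.countBefore v j := by
  obtain ⟨hil, rfl⟩ := getElem?_eq_some_iff.mp hi
  calc l.countBefore l[i] i
      < (l.take (i + 1)).count l[i] := by
        rw [countBefore_eq_count_take, count_getElem_take_succ]; omega
    _ = l.countBefore l[i] (i + 1) := countBefore_eq_count_take.symm
    _ ≤ l.countBefore l[i] j := countBefore_mono hij

theorem countBefore_lt_count (hi : l[i]? = some v) : l.countBefore v i < l.count v := by
  rw [← countBefore_of_ge_length le_rfl]
  exact countBefore_lt_countBefore hi (getElem?_eq_some_iff.mp hi).1

theorem getElem?_idxOfNth (hm : m < l.count v) : l[l.idxOfNth v m]? = some v :=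
  getElem?_eq_some_iff.mpr ⟨idxOfNth_lt_length_of_lt_count hm, getElem_idxOfNth_eq⟩

theorem exists_lt_countBefore_eq (hm : m < l.countBefore v j) :
    ∃ k < j, l[k]? = some v ∧ l.countBefore v k = m := by
  have hmc : m < l.count v := hm.trans_le countBefore_le_count
  refine ⟨l.idxOfNth v m, ?_, getElem?_idxOfNth hmc, countBefore_idxOfNth_of_lt_count hmc⟩
  by_contra! hjk
  have := countBefore_mono (l := l) (v := v) hjk
  rw [countBefore_idxOfNth_of_lt_count hmc] at this
  omega

theorem count_sub_eq_count_le_countBefore [DecidableEq α] (l : List α) (v : α) (c : ℕ) :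
    l.count v - c = Nat.count (fun i => l[i]? = some v ∧ c ≤ l.countBefore v i) l.length := by
  rw [Nat.count_eq_card_filter_range, ← Nat.card_Ico c (l.count v)]
  refine (Finset.card_nbij' (l.countBefore v) (l.idxOfNth v) ?_ ?_ ?_ ?_).symm
  · intro i hi
    obtain ⟨-, hi, hc⟩ := Finset.mem_filter.mp hi
    exact Finset.mem_Ico.mpr ⟨hc, countBefore_lt_count hi⟩
  · intro m hm
    obtain ⟨hcm, hm⟩ := Finset.mem_Ico.mp hm
    have hi := getElem?_idxOfNth hm
    refine Finset.mem_filter.mpr ⟨Finset.mem_range.mpr (getElem?_eq_some_iff.mp hi).1, hi, ?_⟩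
    rwa [countBefore_idxOfNth_of_lt_count hm]
  · intro i hi
    obtain ⟨-, hi, -⟩ := Finset.mem_filter.mp hi
    obtain ⟨hil, rfl⟩ := getElem?_eq_some_iff.mp hi
    exact idxOfNth_countBefore_getElem
  · intro m hm
    exact countBefore_idxOfNth_of_lt_count (Finset.mem_Ico.mp hm).2

end List

section Occurrences

variable {α : Type*} [BEq α] (l₁ l₂ : List α)

def SameOccurrence (i j : ℕ) : Prop :=
  ∃ v, l₁[i]? = some v ∧ l₂[j]? = some v ∧ l₁.countBefore v i = l₂.countBefore v j

variable {l₁ l₂}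

theorem SameOccurrence.symm {i j : ℕ} (h : SameOccurrence l₁ l₂ i j) :
    SameOccurrence l₂ l₁ j i :=
  let ⟨v, hi, hj, hc⟩ := h; ⟨v, hj, hi, hc.symm⟩

variable [LawfulBEq α]

theorem SameOccurrence.not_of_lt_left {i j k : ℕ} (h : SameOccurrence l₁ l₂ i j) (hk : k < i) :
    ¬ SameOccurrence l₁ l₂ k j := by
  rintro ⟨w, hkw, hjw, hcw⟩
  obtain ⟨v, hiv, hjv, hcv⟩ := h
  obtain rfl : w = v := Option.some_injective _ (hjw.symm.trans hjv)
  have := List.countBefore_lt_countBefore hkw hk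
  omega

theorem exists_sameOccurrence_of_countBefore_lt {i j : ℕ} {v : α} (hi : l₁[i]? = some v)
    (hlt : l₁.countBefore v i < l₂.countBefore v j) : ∃ k < j, SameOccurrence l₁ l₂ i k := by
  obtain ⟨k, hkj, hk, hck⟩ := List.exists_lt_countBefore_eq hlt
  exact ⟨k, hkj, v, hi, hk, hck.symm⟩

theorem sameOccurrence_iff {i j : ℕ} : SameOccurrence l₁ l₂ i j ↔
    i < l₁.length ∧ j < l₂.length ∧ l₁[i]? = l₂[j]? ∧
    (∀ k, k < i → ¬ SameOccurrence l₁ l₂ k j) ∧ (∀ k, k < j → ¬ SameOccurrence l₁ l₂ i k) := by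
  constructor
  · intro h
    have ⟨v, hi, hj, _⟩ := h
    exact ⟨(List.getElem?_eq_some_iff.mp hi).1, (List.getElem?_eq_some_iff.mp hj).1,
      hi.trans hj.symm, fun _ => h.not_of_lt_left,
      fun _ hk hik => h.symm.not_of_lt_left hk hik.symm⟩
  · rintro ⟨hil, -, hval, hleft, hright⟩
    obtain ⟨v, hi⟩ : ∃ v, l₁[i]? = some v := ⟨l₁[i], List.getElem?_eq_getElem hil⟩
    have hj : l₂[j]? = some v := hval ▸ hi
    rcases lt_trichotomy (l₁.countBefore v i) (l₂.countBefore v j) with hlt | heq | hgt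
    · obtain ⟨k, hkj, hk⟩ := exists_sameOccurrence_of_countBefore_lt hi hlt
      exact absurd hk (hright k hkj)
    · exact ⟨v, hi, hj, heq⟩
    · obtain ⟨k, hki, hk⟩ := exists_sameOccurrence_of_countBefore_lt hj hgt
      exact absurd hk.symm (hleft k hki)

theorem paired_iff_sameOccurrence (i j : ℕ) : Paired l₁ l₂ i j ↔ SameOccurrence l₁ l₂ i j := by
  induction hn : i + j using Nat.strong_induction_on generalizing i j with
  | _ n ih =>
    have hleft : ∀ k < i, Paired l₁ l₂ k j ↔ SameOccurrence l₁ l₂ k j :=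
      fun k hk => ih (k + j) (by omega) k j rfl
    have hright : ∀ k < j, Paired l₁ l₂ i k ↔ SameOccurrence l₁ l₂ i k :=
      fun k hk => ih (i + k) (by omega) i k rfl
    rw [Paired, sameOccurrence_iff]
    exact and_congr_right' <| and_congr_right' <| and_congr_right' <|
      and_congr (forall₂_congr fun k hk => not_congr (hleft k hk))
        (forall₂_congr fun k hk => not_congr (hright k hk))

theorem forall_not_paired_iff {i : ℕ} {v : α} (hi : l₁[i]? = some v) :
    (∀ j, ¬ Paired l₁ l₂ i j) ↔ l₂.count v ≤ l₁.countBefore v i := by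
  simp only [paired_iff_sameOccurrence]
  constructor
  · intro h
    by_contra! hlt
    rw [← List.countBefore_of_ge_length le_rfl] at hlt
    obtain ⟨k, -, hk⟩ := exists_sameOccurrence_of_countBefore_lt hi hlt
    exact h k hk
  · rintro hle j ⟨w, hiw, hj, hc⟩
    obtain rfl : w = v := Option.some_injective _ (hiw.symm.trans hi)
    have := List.countBefore_lt_count hj
    omega

end Occurrences

open Classical in
/-- Correctness of the `EXCEPT ALL` encoding: the multiset of elements of
`l₁` at unpaired indices is exactly the multiset difference `l₁ - l₂`. -/
theorem unpaired_eq_bag_difference {α : Type*} [DecidableEq α] (l₁ l₂ : List α) :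
    (↑((List.range l₁.length).filterMap
        (fun i => if ∀ j, ¬ Paired l₁ l₂ i j then l₁[i]? else none)) : Multiset α)
      = (↑l₁ : Multiset α) - (↑l₂ : Multiset α) := by
  ext v
  have unpaired_eq_some_iff (i : ℕ) :
      (if ∀ j, ¬ Paired l₁ l₂ i j then l₁[i]? else none) = some v ↔
        l₁[i]? = some v ∧ l₂.count v ≤ l₁.countBefore v i := by
    split_ifs with h
    · exact ⟨fun hi => ⟨hi, (forall_not_paired_iff hi).mp h⟩, And.left⟩
    · exact ⟨nofun, fun ⟨hi, hc⟩ => h ((forall_not_paired_iff hi).mpr hc)⟩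
  rw [Multiset.coe_count, List.count_filterMap, Multiset.count_sub, Multiset.coe_count,
    Multiset.coe_count, List.count_sub_eq_count_le_countBefore]
  exact List.countP_congr fun i _ => by
    simpa only [beq_iff_eq, decide_eq_true_eq] using unpaired_eq_some_iff i
end
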